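/- Let B be the Cayley graph on the group 𝔽₂^{ms} ≅ [d]^s (with d = 2^m) with generator set U closed under inversion, and let the shifted walk of length k draw b_1 uniformly, then b_{i+1} = shift(b_i + u_i) for independent uniform u_i ∈ U, where shift cyclically rotates the s coordinate blocks. Then for all k ≤ s, the tuple (b_1[1], b_2[1], …, b_k[1]) of first coordinate blocks is uniformly distributed on [d]^k. -/

import Mathlib

open Finset

/-- Cyclic shift of the `s` coordinate blocks. -/
def shiftB {s : ℕ} [NeZero s] {G : Type*} (b : Fin s → G) : Fin s → G :=
  fun i => b (i + 1)

/-- The shifted walk in the Cayley graph: `b 1 = b`, `b (i+1) = shift (b i + u i)`. -/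
def bSeq {s : ℕ} [NeZero s] {G : Type*} [AddGroup G] (b : Fin s → G) (u : ℕ → Fin s → G) :
    ℕ → Fin s → G
  | 0 => b
  | i + 1 => shiftB (bSeq b u i + u i)

/-!
The shift is additive, so the `i`-th point of the walk is `shift^i b₁` plus a term that depends
only on the generators. Reading off the first block, `b_i[1] = b₁[i] + c_i(u)`; for `k ≤ s` the
blocks `b₁[1], …, b₁[k]` are distinct coordinates of the uniform `b₁`, hence independent and
uniform, and a translate of a uniform vector is uniform.
-/

section Walk

variable {s : ℕ} [NeZero s] {G : Type*}

theorem shiftB_add [Add G] (x y : Fin s → G) : shiftB (x + y) = shiftB x + shiftB y := rfl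

theorem bSeq_eq_iterate_add [AddGroup G] (b : Fin s → G) (u : ℕ → Fin s → G) (i : ℕ) :
    bSeq b u i = shiftB^[i] b + bSeq 0 u i := by
  induction i with
  | zero => simp [bSeq]
  | succ i ih =>
    rw [bSeq, bSeq, ih, add_assoc, shiftB_add, Function.iterate_succ_apply']

open Fin.NatCast in
theorem iterate_shiftB_apply (b : Fin s → G) (i : ℕ) (j : Fin s) :
    shiftB^[i] b j = b (j + i) := by
  induction i generalizing b with
  | zero => simp
  | succ i ih => rw [Function.iterate_succ_apply, ih, shiftB, Nat.cast_succ, add_assoc]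

theorem bSeq_apply_zero [AddGroup G] (b : Fin s → G) (u : ℕ → Fin s → G) {i : ℕ}
    (hi : i < s) :
    bSeq b u i 0 = b ⟨i, hi⟩ + bSeq 0 u i 0 := by
  rw [bSeq_eq_iterate_add, Pi.add_apply, iterate_shiftB_apply, zero_add, Fin.natCast_eq_mk hi]

end Walk

section Restriction

variable {α β G : Type*} [Fintype α] [DecidableEq α] [Fintype β] [DecidableEq β] [Fintype G]
  {ι : α → β}

theorem sum_comp_of_injective {M : Type*} [AddCommMonoid M] (hι : Function.Injective ι)
    (F : (α → G) → M) :
    ∑ b : β → G, F (b ∘ ι)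
      = (Fintype.card G ^ (Fintype.card β - Fintype.card α)) • ∑ v, F v := by
  classical
  set e := Equiv.ofInjective ι hι
  have hrestrict (w : Set.range ι → G) (z : {y // y ∉ Set.range ι} → G) :
      (Equiv.piEquivPiSubtypeProd (· ∈ Set.range ι) (fun _ => G)).symm (w, z) ∘ ι
        = w ∘ e := by
    funext a
    simp [Equiv.piEquivPiSubtypeProd_symm_apply, e]
  have hcompl : Fintype.card ({y // y ∉ Set.range ι} → G)
      = Fintype.card G ^ (Fintype.card β - Fintype.card α) := by
    rw [Fintype.card_fun, Fintype.card_subtype_compl, Set.card_range_of_injective hι]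
  calc ∑ b : β → G, F (b ∘ ι)
      = ∑ wz : (Set.range ι → G) × ({y // y ∉ Set.range ι} → G), F (wz.1 ∘ e) :=
        (Fintype.sum_equiv (Equiv.piEquivPiSubtypeProd (· ∈ Set.range ι) (fun _ => G)).symm
          _ _ fun wz => by rw [hrestrict]).symm
    _ = Fintype.card ({y // y ∉ Set.range ι} → G)
          • ∑ w : Set.range ι → G, F (w ∘ e) := by
        rw [Fintype.sum_prod_type, smul_sum]
        simp only [sum_const, card_univ]
    _ = _ := by
        rw [hcompl, ← Equiv.sum_comp (e.symm.arrowCongr (Equiv.refl G))]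
        rfl

theorem card_fun_eq_mul_of_injective (hι : Function.Injective ι) :
    Fintype.card (β → G)
      = Fintype.card (α → G) * Fintype.card G ^ (Fintype.card β - Fintype.card α) := by
  rw [Fintype.card_fun, Fintype.card_fun, ← pow_add,
    Nat.add_sub_cancel' (Fintype.card_le_of_injective ι hι)]

theorem sum_comp_add_of_injective {M : Type*} [AddCommMonoid M] [AddGroup G]
    (hι : Function.Injective ι) (c : α → G) (F : (α → G) → M) :
    ∑ b : β → G, F (b ∘ ι + c)
      = (Fintype.card G ^ (Fintype.card β - Fintype.card α)) • ∑ v, F v := by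
  rw [sum_comp_of_injective hι (fun v => F (v + c))]
  exact congrArg _ (Equiv.sum_comp (Equiv.addRight c) F)

end Restriction

theorem stmt6 (m s : ℕ) [NeZero s]
    (U : Finset (Fin s → Fin m → ZMod 2)) (hU : U.Nonempty) :
    ∀ k : ℕ, k ≤ s → ∀ F : (Fin k → (Fin m → ZMod 2)) → ℝ,
      (∑ b : Fin s → Fin m → ZMod 2, ∑ u ∈ Fintype.piFinset (fun _ : Fin k => U),
          F (fun i => bSeq b (fun j => if h : j < k then u ⟨j, h⟩ else 0) (i : ℕ) 0))
        / ((Fintype.card (Fin s → Fin m → ZMod 2) : ℝ) * (U.card : ℝ) ^ (k : ℕ))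
      = (∑ v : Fin k → (Fin m → ZMod 2), F v)
        / (Fintype.card (Fin k → Fin m → ZMod 2) : ℝ) := by
  intro k hk F
  have hι := Fin.castLE_injective hk
  have hwalk (u : ℕ → Fin s → Fin m → ZMod 2) :
      ∑ b : Fin s → Fin m → ZMod 2, F (fun i : Fin k => bSeq b u i 0)
        = (Fintype.card (Fin m → ZMod 2) ^ (Fintype.card (Fin s) - Fintype.card (Fin k)))
            • ∑ v, F v := by
    rw [← sum_comp_add_of_injective hι (fun i : Fin k => bSeq 0 u i 0) F]
    exact sum_congr rfl fun b _ =>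
      congrArg F (funext fun i => bSeq_apply_zero b u (i.2.trans_le hk))
  rw [sum_comm, card_fun_eq_mul_of_injective hι]
  simp only [hwalk, sum_const, Fintype.card_piFinset, prod_const, card_univ, Fintype.card_fin,
    nsmul_eq_mul]
  have hU0 : (U.card : ℝ) ≠ 0 := Nat.cast_ne_zero.2 hU.card_ne_zero
  field_simp
  push_cast
  ring
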